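/- arXiv:1703.04954 — 3 statements merged into one kernel-verified Lean document; each statement's English description precedes it below -/
import Mathlib

section
/- Let A be a string whose run-length encoding has m maximal runs, and for a position i of A let run(i) denote the index (from 1 to m) of the maximal run of A containing position i. Let C be a nonempty string. Then the set of pairs { (run(s), run(f)) : [s,f] is a minimal C-interval of A } has cardinality at most 2m − 1. (Equivalently, the equivalence relation on minimal C-intervals of A that identifies two intervals when their start positions lie in the same run of A and their end positions lie in the same run of A has at most 2m − 1 equivalence classes.) -/
namespace StrIcLcs

/-- The 1-based slice `A[s..f]` of a list (empty when `f < s`). -/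
def slc {α : Type*} (A : List α) (s f : ℕ) : List α := (A.take f).drop (s - 1)

/-- `[s,f]` (1-based, `1 ≤ s ≤ f ≤ |A|`) is a minimal `C`-interval of `A`:
`C` is a subsequence of `A[s..f]` but of neither `A[s+1..f]` nor `A[s..f-1]`. -/
def MinCInterval {α : Type*} (A C : List α) (s f : ℕ) : Prop :=
  1 ≤ s ∧ s ≤ f ∧ f ≤ A.length ∧
    C.Sublist (slc A s f) ∧ ¬ C.Sublist (slc A (s + 1) f) ∧ ¬ C.Sublist (slc A s (f - 1))

/-- The number of maximal runs of a list (the size of its run-length encoding). -/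
def rleLen {α : Type*} [DecidableEq α] (A : List α) : ℕ :=
  (A.destutter (· ≠ ·)).length

/-- The (1-based) index of the maximal run of `A` containing the 1-based position `i`,
i.e. the number of maximal runs of the prefix `A[1..i]`. -/
def runIdx {α : Type*} [DecidableEq α] (A : List α) (i : ℕ) : ℕ :=
  rleLen (A.take i)

/-- Slices are monotone with respect to the sublist relation. -/
lemma slc_sublist {α : Type*} (A : List α) {s s' f f' : ℕ} (hs : s ≤ s') (hf : f' ≤ f) :
    (slc A s' f').Sublist (slc A s f) := by
  unfold slc
  have h1 : A.take f' = (A.take f).take f' := by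
    rw [List.take_take, min_eq_left hf]
  rw [h1]
  exact (List.drop_sublist_drop_left _ (show s - 1 ≤ s' - 1 by omega)).trans
    ((List.take_sublist _ _).drop _)

/-- Endpoint monotonicity of minimal `C`-intervals. -/
lemma minCInterval_mono {α : Type*} {A C : List α} {s f s' f' : ℕ}
    (h : MinCInterval A C s f) (h' : MinCInterval A C s' f') (hss : s ≤ s') : f ≤ f' := by
  by_contra hff
  push_neg at hff
  obtain ⟨hs1, hsf, hfA, hsub, -, hmin⟩ := h
  obtain ⟨hs1', hsf', hfA', hsub', -, -⟩ := h'
  exact hmin (hsub'.trans (slc_sublist A hss (by omega)))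

lemma destutter'_length_le_append {α : Type*} (R : α → α → Prop) [DecidableRel R] :
    ∀ (l t : List α) (a : α),
      (List.destutter' R a l).length ≤ (List.destutter' R a (l ++ t)).length
  | [], t, a => by
    simpa [Nat.one_le_iff_ne_zero, Nat.pos_iff_ne_zero] using List.length_pos_iff.mpr (List.destutter'_ne_nil (l := t) (R := R) (a := a))
  | b :: l, t, a => by
    simp only [List.cons_append, List.destutter'_cons]
    split_ifs with h
    · simpa using destutter'_length_le_append R l t b
    · exact destutter'_length_le_append R l t a

lemma rleLen_le_append {α : Type*} [DecidableEq α] (l t : List α) :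
    rleLen l ≤ rleLen (l ++ t) := by
  cases l with
  | nil => exact Nat.zero_le _
  | cons a l =>
    simpa [rleLen, List.destutter_cons'] using destutter'_length_le_append (· ≠ ·) l t a

lemma runIdx_mono {α : Type*} [DecidableEq α] (A : List α) {i j : ℕ} (hij : i ≤ j) :
    runIdx A i ≤ runIdx A j := by
  have h : A.take j = A.take i ++ (A.take j).drop i := by
    calc A.take j = (A.take j).take i ++ (A.take j).drop i := (List.take_append_drop _ _).symm
      _ = A.take i ++ (A.take j).drop i := by rw [List.take_take, min_eq_left hij]
  rw [runIdx, runIdx, h]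
  exact rleLen_le_append _ _

lemma runIdx_le_rleLen {α : Type*} [DecidableEq α] (A : List α) (i : ℕ) :
    runIdx A i ≤ rleLen A := by
  conv_rhs => rw [← List.take_append_drop i A]
  exact rleLen_le_append _ _

lemma one_le_runIdx {α : Type*} [DecidableEq α] {A : List α} {i : ℕ}
    (hi : 1 ≤ i) (hA : A ≠ []) : 1 ≤ runIdx A i := by
  have h : A.take i ≠ [] := by
    simp [List.take_eq_nil_iff, hA]
    omega
  obtain ⟨a, l, hl⟩ := List.exists_cons_of_ne_nil h
  rw [runIdx, hl, rleLen, List.destutter_cons']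
  exact List.length_pos_iff.mpr (List.destutter'_ne_nil _ _)

/-- Lemma 7: for a nonempty constraint `C`, the set of pairs
`(run(s), run(f))` over all minimal `C`-intervals `[s,f]` of `A` has at most `2m - 1`
elements, where `m = |RLE(A)|`. Equivalently, grouping minimal `C`-intervals by the runs
containing their endpoints produces at most `2m - 1` equivalence classes. -/
theorem card_run_pairs_of_minCIntervals {α : Type*} [DecidableEq α]
    (A C : List α) (m : ℕ) (hm : rleLen A = m) (hC : C ≠ []) :
    {q : ℕ × ℕ | ∃ s f, MinCInterval A C s f ∧ q = (runIdx A s, runIdx A f)}.ncard ≤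
      2 * m - 1 := by
  set S := {q : ℕ × ℕ | ∃ s f, MinCInterval A C s f ∧ q = (runIdx A s, runIdx A f)} with hS
  have hmem : ∀ q ∈ S, (fun q : ℕ × ℕ => q.1 + q.2) q ∈ Set.Icc 2 (2 * m) := by
    rintro q ⟨s, f, hsf, rfl⟩
    obtain ⟨hs1, hsfle, hfA, -⟩ := hsf
    have hA : A ≠ [] := by
      intro h; rw [h] at hfA; simp at hfA; omega
    have h1 : 1 ≤ runIdx A s := one_le_runIdx hs1 hA
    have h2 : runIdx A s ≤ runIdx A f := runIdx_mono A hsfle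
    have h3 : runIdx A f ≤ m := hm ▸ runIdx_le_rleLen A f
    simp only [Set.mem_Icc]
    constructor <;> omega
  have hinj : Set.InjOn (fun q : ℕ × ℕ => q.1 + q.2) S := by
    rintro q ⟨s, f, hsf, rfl⟩ q' ⟨s', f', hsf', rfl⟩ hsum
    simp only at hsum
    rcases le_total s s' with h | h
    · have hf : f ≤ f' := minCInterval_mono hsf hsf' h
      have h1 := runIdx_mono A h
      have h2 := runIdx_mono A hf
      have : runIdx A s = runIdx A s' ∧ runIdx A f = runIdx A f' := by omega
      simp [this.1, this.2]
    · have hf : f' ≤ f := minCInterval_mono hsf' hsf h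
      have h1 := runIdx_mono A h
      have h2 := runIdx_mono A hf
      have : runIdx A s = runIdx A s' ∧ runIdx A f = runIdx A f' := by omega
      simp [this.1, this.2]
  have hle : S.ncard ≤ (Set.Icc 2 (2 * m)).ncard :=
    Set.ncard_le_ncard_of_injOn _ hmem hinj (Set.finite_Icc _ _)
  have hIcc : (Set.Icc 2 (2 * m)).ncard = 2 * m - 1 := by
    rw [← Finset.coe_Icc, Set.ncard_coe_finset, Nat.card_Icc]
    omega
  omega

end StrIcLcs
end

section
/- Let A and B be strings with run-length encodings RLE(A) = a_1^{M_1} ⋯ a_m^{M_m} and RLE(B) = b_1^{N_1} ⋯ b_n^{N_n}, and write M_{1..p} = M_1 + ⋯ + M_p and N_{1..q} = N_1 + ⋯ + N_q (with M_{1..0} = N_{1..0} = 0). Let i, j be positions with M_{1..p-1} < i ≤ M_{1..p} and N_{1..q-1} < j ≤ N_{1..q} for some 1 ≤ p ≤ m, 1 ≤ q ≤ n, and suppose a_p ≠ b_q. Then lcs(A[1..i], B[1..j]) = max{ lcs(A[1..M_{1..p-1}], B[1..j]), lcs(A[1..i], B[1..N_{1..q-1}]) }. -/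
namespace StrIcLcs

/-- The maximum length of a common subsequence of `A` and `B`. -/
noncomputable def lcsLen {α : Type*} (A B : List α) : ℕ :=
  sSup {k | ∃ Z : List α, Z.Sublist A ∧ Z.Sublist B ∧ Z.length = k}

/-- `runs` is a valid run-length encoding: every exponent is positive and adjacent runs
carry distinct characters. -/
def RunsOK {α : Type*} (runs : List (α × ℕ)) : Prop :=
  (∀ r ∈ runs, 1 ≤ r.2) ∧ runs.Chain' (fun r r' => r.1 ≠ r'.1)

/-- The string encoded by a run-length encoding. -/
def decodeRLE {α : Type*} (runs : List (α × ℕ)) : List α :=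
  (runs.map fun r => List.replicate r.2 r.1).flatten

/-- `sumTo runs p` is `M_{1..p} = M_1 + ⋯ + M_p`, the total length of the first `p` runs. -/
def sumTo {α : Type*} (runs : List (α × ℕ)) (p : ℕ) : ℕ :=
  ((runs.take p).map Prod.snd).sum


section Helpers
variable {α : Type*}

lemma lcs_set_nonempty (A B : List α) :
    {k | ∃ Z : List α, Z.Sublist A ∧ Z.Sublist B ∧ Z.length = k}.Nonempty :=
  ⟨0, [], List.nil_sublist _, List.nil_sublist _, rfl⟩

lemma lcs_set_bdd (A B : List α) :
    BddAbove {k | ∃ Z : List α, Z.Sublist A ∧ Z.Sublist B ∧ Z.length = k} := by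
  refine ⟨A.length, fun k hk => ?_⟩
  obtain ⟨Z, hZA, _, rfl⟩ := hk
  exact hZA.length_le

lemma exists_lcs_witness (A B : List α) :
    ∃ Z : List α, Z.Sublist A ∧ Z.Sublist B ∧ Z.length = lcsLen A B :=
  Nat.sSup_mem (lcs_set_nonempty A B) (lcs_set_bdd A B)

lemma le_lcsLen {Z A B : List α} (hA : Z.Sublist A) (hB : Z.Sublist B) :
    Z.length ≤ lcsLen A B :=
  le_csSup (lcs_set_bdd A B) ⟨Z, hA, hB, rfl⟩

lemma lcsLen_mono_left {A A' : List α} (B : List α) (h : A'.Sublist A) :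
    lcsLen A' B ≤ lcsLen A B := by
  obtain ⟨Z, hZA, hZB, hlen⟩ := exists_lcs_witness A' B
  exact hlen ▸ le_lcsLen (hZA.trans h) hZB

lemma lcsLen_mono_right (A : List α) {B B' : List α} (h : B'.Sublist B) :
    lcsLen A B' ≤ lcsLen A B := by
  obtain ⟨Z, hZA, hZB, hlen⟩ := exists_lcs_witness A B'
  exact hlen ▸ le_lcsLen hZA (hZB.trans h)

lemma sublist_of_getLast_ne {Z Q : List α} {l : ℕ} {b : α}
    (h : Z.Sublist (Q ++ List.replicate l b)) (hz : Z ≠ [])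
    (hne : Z.getLast hz ≠ b) : Z.Sublist Q := by
  obtain ⟨Z1, Z2, hZ, h1, h2⟩ := List.sublist_append_iff.mp h
  rcases eq_or_ne Z2 [] with h0 | h0
  · subst h0; simpa [hZ] using h1
  · exfalso
    apply hne
    have : Z.getLast hz = Z2.getLast h0 := by
      subst hZ; exact List.getLast_append_of_ne_nil _ h0
    rw [this]
    exact List.eq_of_mem_replicate (h2.subset (Z2.getLast_mem h0))

lemma decodeRLE_append (l1 l2 : List (α × ℕ)) :
    decodeRLE (l1 ++ l2) = decodeRLE l1 ++ decodeRLE l2 := by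
  simp [decodeRLE]

lemma length_decodeRLE_take (runs : List (α × ℕ)) (p : ℕ) :
    (decodeRLE (runs.take p)).length = sumTo runs p := by
  simp [decodeRLE, sumTo, Function.comp_def]

lemma take_decomp (runs : List (α × ℕ)) (p i : ℕ) (a : α) (M : ℕ)
    (h : runs[p]? = some (a, M)) (h1 : sumTo runs p ≤ i) (h2 : i ≤ sumTo runs p + M) :
    (decodeRLE runs).take i =
      (decodeRLE runs).take (sumTo runs p) ++ List.replicate (i - sumTo runs p) a := by
  obtain ⟨hlt, hget⟩ := List.getElem?_eq_some_iff.mp h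
  have hdrop : runs.drop p = (a, M) :: runs.drop (p + 1) := by
    rw [List.drop_eq_getElem_cons hlt, hget]
  have hruns : runs = runs.take p ++ ((a, M) :: runs.drop (p + 1)) := by
    rw [← hdrop, List.take_append_drop]
  set m := sumTo runs p with hm
  set X := decodeRLE (runs.take p) with hX
  set R := decodeRLE (runs.drop (p + 1)) with hR
  have hdec : decodeRLE runs = X ++ (List.replicate M a ++ R) := by
    conv_lhs => rw [hruns]
    rw [decodeRLE_append]
    simp [decodeRLE, hX, hR]
  have hlen : X.length = m := length_decodeRLE_take runs p
  rw [hdec]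
  have t1 : (X ++ (List.replicate M a ++ R)).take i
      = X ++ (List.replicate M a ++ R).take (i - m) := by
    conv_lhs => rw [show i = X.length + (i - m) by rw [hlen]; omega]
    exact List.take_length_add_append _
  have t2 : (X ++ (List.replicate M a ++ R)).take m = X := by
    rw [← hlen]; exact List.take_left
  rw [t1, t2]
  congr 1
  rw [List.take_append_of_le_length (by simpa using by omega : i - m ≤ (List.replicate M a).length),
    List.take_replicate, min_eq_left (by omega)]

end Helpers

/-- let `RLE(A) = a_1^{M_1} ⋯ a_m^{M_m}`, `RLE(B) = b_1^{N_1} ⋯ b_n^{N_n}`,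
and let `i`, `j` lie in the `p`-th run of `A` and the `q`-th run of `B` respectively, with
`a_p ≠ b_q`. Then
`lcs(A[1..i], B[1..j]) = max( lcs(A[1..M_{1..p-1}], B[1..j]), lcs(A[1..i], B[1..N_{1..q-1}]) )`. -/
theorem lcs_prefix_distinct_run_chars {α : Type*} (A B : List α)
    (runsA runsB : List (α × ℕ))
    (hA : A = decodeRLE runsA) (hAok : RunsOK runsA)
    (hB : B = decodeRLE runsB) (hBok : RunsOK runsB)
    (p q i j : ℕ) (hp1 : 1 ≤ p) (hq1 : 1 ≤ q)
    (ap bq : α) (Mp Nq : ℕ)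
    (hap : runsA[p - 1]? = some (ap, Mp)) (hbq : runsB[q - 1]? = some (bq, Nq))
    (hi1 : sumTo runsA (p - 1) < i) (hi2 : i ≤ sumTo runsA p)
    (hj1 : sumTo runsB (q - 1) < j) (hj2 : j ≤ sumTo runsB q)
    (hab : ap ≠ bq) :
    lcsLen (slc A 1 i) (slc B 1 j) =
      max (lcsLen (slc A 1 (sumTo runsA (p - 1))) (slc B 1 j))
        (lcsLen (slc A 1 i) (slc B 1 (sumTo runsB (q - 1)))) := by
  have hslc : ∀ (L : List α) (f : ℕ), slc L 1 f = L.take f := by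
    intro L f; simp [slc]
  set m := sumTo runsA (p - 1) with hm
  set n' := sumTo runsB (q - 1) with hn'
  have hsumA : sumTo runsA p = m + Mp := by
    have hp : runsA.take p = runsA.take (p - 1) ++ [(ap, Mp)] := by
      conv_lhs => rw [show p = (p - 1) + 1 by omega]
      rw [List.take_succ, hap]; rfl
    simp [sumTo, hp, hm]
  have hsumB : sumTo runsB q = n' + Nq := by
    have hq : runsB.take q = runsB.take (q - 1) ++ [(bq, Nq)] := by
      conv_lhs => rw [show q = (q - 1) + 1 by omega]
      rw [List.take_succ, hbq]; rfl
    simp [sumTo, hq, hn']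
  have hXdec : A.take i = A.take m ++ List.replicate (i - m) ap := by
    rw [hA]
    exact take_decomp runsA (p - 1) i ap Mp hap (le_of_lt hi1) (by omega)
  have hYdec : B.take j = B.take n' ++ List.replicate (j - n') bq := by
    rw [hB]
    exact take_decomp runsB (q - 1) j bq Nq hbq (le_of_lt hj1) (by omega)
  simp only [hslc]
  apply le_antisymm
  · obtain ⟨Z, hZX, hZY, hZlen⟩ := exists_lcs_witness (A.take i) (B.take j)
    rw [← hZlen]
    rcases eq_or_ne Z [] with rfl | hz
    · simp
    by_cases hzap : Z.getLast hz = ap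
    · have hzbq : Z.getLast hz ≠ bq := hzap ▸ hab
      exact le_max_of_le_right
        (le_lcsLen hZX (sublist_of_getLast_ne (hYdec ▸ hZY) hz hzbq))
    · exact le_max_of_le_left
        (le_lcsLen (sublist_of_getLast_ne (hXdec ▸ hZX) hz hzap) hZY)
  · apply max_le
    · exact lcsLen_mono_left _ (hXdec ▸ List.sublist_append_left _ _)
    · exact lcsLen_mono_right _ (hYdec ▸ List.sublist_append_left _ _)

end StrIcLcs
end

section
/- Let A be a string of length M and C a nonempty string. Define a finite sequence of intervals as follows: set s_0 = 0, and for i ≥ 1, while C is a subsequence of A[s_{i-1}+1..M], let f_i be the smallest index such that C is a subsequence of A[s_{i-1}+1..f_i], and let s_i be the largest index with s_{i-1}+1 ≤ s_i ≤ f_i such that C is a subsequence of A[s_i..f_i]; stop when C is not a subsequence of A[s_{i-1}+1..M]. Then the intervals [s_1,f_1], …, [s_l,f_l] produced by this procedure are exactly the minimal C-intervals of A. -/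
namespace StrIcLcs

lemma slc_mono {α : Type*} (A : List α) {s f s' f' : ℕ} (hs : s' ≤ s) (hf : f ≤ f') :
    (slc A s f).Sublist (slc A s' f') := by
  have h1 : (slc A s f).Sublist (slc A s' f) := by
    unfold slc
    rw [show s - 1 = (s' - 1) + (s - 1 - (s' - 1)) by omega, ← List.drop_drop]
    exact (List.drop_suffix _ _).sublist
  refine h1.trans ?_
  unfold slc
  rw [List.drop_take, List.drop_take]
  exact (List.take_prefix_take_left (by omega)).sublist

lemma slc_nil {α : Type*} (A : List α) {s f : ℕ} (h : f < s) : slc A s f = [] := by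
  unfold slc
  exact List.drop_eq_nil_of_le (le_trans (A.length_take_le f) (by omega))

/-- the greedy forward/backward search procedure, started from `s 0 = 0`,
which for `i = 1, …, l` (while `C` is still a subsequence of `A[s_{i-1}+1..M]`) takes `f i`
minimal with `C` a subsequence of `A[s_{i-1}+1..f i]` and then `s i` maximal in
`[s_{i-1}+1, f i]` with `C` a subsequence of `A[s i..f i]`, and which stops as soon as `C` is
not a subsequence of `A[s l + 1..M]`, produces exactly the minimal `C`-intervals of `A`. -/
theorem procedure_produces_all_minCIntervals {α : Type*} (A C : List α) (M : ℕ)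
    (hM : A.length = M) (hC : C ≠ []) (l : ℕ) (s f : ℕ → ℕ) (hs0 : s 0 = 0)
    (hstep : ∀ i, 1 ≤ i → i ≤ l →
      C.Sublist (slc A (s (i - 1) + 1) M) ∧
      C.Sublist (slc A (s (i - 1) + 1) (f i)) ∧
      (∀ f', C.Sublist (slc A (s (i - 1) + 1) f') → f i ≤ f') ∧
      s (i - 1) + 1 ≤ s i ∧ s i ≤ f i ∧
      C.Sublist (slc A (s i) (f i)) ∧
      (∀ s'', s (i - 1) + 1 ≤ s'' → s'' ≤ f i → C.Sublist (slc A s'' (f i)) → s'' ≤ s i))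
    (hstop : ¬ C.Sublist (slc A (s l + 1) M)) :
    ∀ s' f' : ℕ, MinCInterval A C s' f' ↔ ∃ i, 1 ≤ i ∧ i ≤ l ∧ s' = s i ∧ f' = f i := by
  intro s' f'
  constructor
  · rintro ⟨h1, h2, h3, h4, h5, h6⟩
    rw [hM] at h3
    -- s' ≤ s l
    have hsl : s' ≤ s l := by
      by_contra h
      push_neg at h
      exact hstop (h4.trans (slc_mono A (by omega) h3))
    -- find i with s (i-1) + 1 ≤ s' ≤ s i
    have key : ∀ j, j ≤ l → s' ≤ s j →
        ∃ i, 1 ≤ i ∧ i ≤ l ∧ s (i - 1) + 1 ≤ s' ∧ s' ≤ s i := by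
      intro j
      induction j with
      | zero => intro _ h; omega
      | succ j ih =>
        intro hjl hsj
        by_cases hc : s' ≤ s j
        · exact ih (by omega) hc
        · exact ⟨j + 1, by omega, hjl, by simpa using (by omega : s j + 1 ≤ s'), hsj⟩
    obtain ⟨i, hi1, hil, hlo, hhi⟩ := key l le_rfl hsl
    obtain ⟨_, hCf, hfmin, hss, hsf, hCi, hsmax⟩ := hstep i hi1 hil
    -- f i ≤ f'
    have hfile : f i ≤ f' := hfmin f' (h4.trans (slc_mono A hlo le_rfl))
    -- f' = f i
    have hfe : f' = f i := by
      by_contra h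
      exact h6 (hCi.trans (slc_mono A hhi (by omega)))
    subst hfe
    -- s' = s i
    have hsile : s' ≤ s i := hsmax s' hlo h2 h4
    have : s' = s i := by
      by_contra h
      exact h5 (hCi.trans (slc_mono A (by omega) le_rfl))
    exact ⟨i, hi1, hil, this, rfl⟩
  · rintro ⟨i, hi1, hil, rfl, rfl⟩
    obtain ⟨hCM, hCf, hfmin, hss, hsf, hCi, hsmax⟩ := hstep i hi1 hil
    have hfM : f i ≤ M := hfmin M hCM
    refine ⟨by omega, hsf, by omega, hCi, ?_, ?_⟩
    · intro h
      by_cases hc : s i + 1 ≤ f i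
      · have := hsmax (s i + 1) (by omega) hc h
        omega
      · rw [slc_nil A (by omega)] at h
        exact hC (List.sublist_nil.mp h)
    · intro h
      have := hfmin (f i - 1) (h.trans (slc_mono A (by omega) le_rfl))
      omega

end StrIcLcs
end
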